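/- arXiv:2204.11158 — 2 statements merged into one kernel-verified Lean document; each statement's English description precedes it below -/
import Mathlib

section
/- Recursive structure of L^n: for i, j, k, l ∈ {0,1}^N with N ≥ 2, L^N(i,j;k,l) = 𝔪𝔦𝔫( L^{N−1}(i_{[1,N−1]}, j_{[1,N−1]}; k_{[1,N−1]}, l_{[1,N−1]}), L^1(s_N(i), s_N(j); s_N(k), s_N(l)) ), where x_{[1,N−1]} denotes the truncation of x to its first N−1 coordinates. -/
open Finset

/-- The single-colored vertex weight matrix `L¹`. -/
def L1 (t : ℝ) : Bool → Bool → Bool → Bool → ℝ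
  | true,  true,  true,  true  => t
  | true,  true,  false, false => 1 - t
  | true,  false, true,  false => 1
  | false, true,  false, true  => 1
  | false, false, false, false => 1
  | _, _, _, _ => 0

/-- The `r`-fold projection `s_r(x)`: parity of the sum of the first `r` coordinates. -/
def sproj {n : ℕ} (x : Fin n → Bool) (r : Fin n) : Bool :=
  decide ((∑ m ∈ Finset.univ.filter (fun m => m ≤ r), (if x m then (1 : ℕ) else 0)) % 2 = 1)

/-- The modified minimum `𝔪𝔦𝔫` of a (nonempty) family: `0` if both `t` and `1 - t`
occur among its values, the ordinary minimum otherwise. -/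
noncomputable def mminOver (t : ℝ) {n : ℕ} (f : Fin (n + 1) → ℝ) : ℝ := by
  classical
  exact if (∃ r, f r = t) ∧ (∃ r, f r = 1 - t) then 0
    else Finset.univ.inf' Finset.univ_nonempty f

/-- Binary modified minimum. -/
noncomputable def mmin (t x y : ℝ) : ℝ := by
  classical
  exact if (x = t ∧ y = 1 - t) ∨ (x = 1 - t ∧ y = t) then 0 else min x y

/-- The colored vertex weight matrix `Lⁿ` (here with `n + 1` colors). -/
noncomputable def Ln (t : ℝ) {n : ℕ} (i j k l : Fin (n + 1) → Bool) : ℝ :=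
  mminOver t (fun r => L1 t (sproj i r) (sproj j r) (sproj k r) (sproj l r))

lemma L1_mem (t : ℝ) (a b c d : Bool) :
    L1 t a b c d = 0 ∨ L1 t a b c d = t ∨ L1 t a b c d = 1 - t ∨ L1 t a b c d = 1 := by
  cases a <;> cases b <;> cases c <;> cases d <;> simp [L1]

lemma sproj_castSucc {n : ℕ} (x : Fin (n + 2) → Bool) (r : Fin (n + 1)) :
    sproj (fun m : Fin (n + 1) => x m.castSucc) r = sproj x r.castSucc := by
  unfold sproj
  have hsum : (∑ m ∈ Finset.univ.filter (fun m => m ≤ r),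
        (if (fun m : Fin (n + 1) => x m.castSucc) m then (1 : ℕ) else 0))
      = ∑ m ∈ Finset.univ.filter (fun m => m ≤ r.castSucc), (if x m then (1 : ℕ) else 0) := by
    rw [Finset.sum_filter, Finset.sum_filter]
    conv_rhs => rw [Fin.sum_univ_castSucc]
    have hlast : ¬ (Fin.last (n + 1) ≤ r.castSucc) := fun h =>
      absurd (Fin.last_le_iff.mp h) (Fin.castSucc_lt_last r).ne
    rw [if_neg hlast, add_zero]
    refine Finset.sum_congr rfl fun m _ => ?_
    simp [Fin.castSucc_le_castSucc_iff]
  rw [hsum]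

/-- The key combinatorial lemma about the modified minimum. -/
lemma mminOver_recursive (t : ℝ) (ht0 : 0 < t) (ht1 : t < 1) (ht2 : t ≠ 1 / 2) (n : ℕ)
    (f : Fin (n + 2) → ℝ)
    (hvals : ∀ r, f r = 0 ∨ f r = t ∨ f r = 1 - t ∨ f r = 1) :
    mminOver t f = mmin t (mminOver t (fun r : Fin (n + 1) => f r.castSucc))
      (f (Fin.last (n + 1))) := by
  classical
  have htne : t ≠ 1 - t := fun h => ht2 (by linarith)
  have hbvals : f (Fin.last (n + 1)) = 0 ∨ f (Fin.last (n + 1)) = t ∨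
      f (Fin.last (n + 1)) = 1 - t ∨ f (Fin.last (n + 1)) = 1 := hvals _
  have hbnn : 0 ≤ f (Fin.last (n + 1)) := by
    rcases hbvals with h | h | h | h <;> rw [h] <;> linarith
  have hexists : ∀ c : ℝ, (∃ r : Fin (n + 2), f r = c) ↔
      (∃ r : Fin (n + 1), f r.castSucc = c) ∨ f (Fin.last (n + 1)) = c := by
    intro c
    constructor
    · rintro ⟨r, hr⟩
      rcases Fin.eq_castSucc_or_eq_last r with ⟨q, rfl⟩ | rfl
      · exact Or.inl ⟨q, hr⟩
      · exact Or.inr hr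
    · rintro (⟨q, hq⟩ | h)
      exacts [⟨q.castSucc, hq⟩, ⟨_, h⟩]
  unfold mminOver mmin
  beta_reduce
  set b : ℝ := f (Fin.last (n + 1)) with hbdef
  set m : ℝ := Finset.univ.inf' Finset.univ_nonempty (fun r : Fin (n + 1) => f r.castSucc)
    with hmdef
  obtain ⟨r0, -, hr0⟩ := Finset.exists_mem_eq_inf'
    (Finset.univ_nonempty (α := Fin (n + 1))) (fun r : Fin (n + 1) => f r.castSucc)
  have hr0' : m = f r0.castSucc := by rw [hmdef]; exact hr0
  have hmvals : m = 0 ∨ m = t ∨ m = 1 - t ∨ m = 1 := by rw [hr0']; exact hvals _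
  have hmnn : 0 ≤ m := by rcases hmvals with h | h | h | h <;> rw [h] <;> linarith
  have hmle : ∀ r : Fin (n + 1), m ≤ f r.castSucc := fun r => by
    rw [hmdef]
    exact Finset.inf'_le _ (Finset.mem_univ r)
  have hinf : Finset.univ.inf' Finset.univ_nonempty f = min m b := by
    apply le_antisymm
    · refine le_min ?_ (Finset.inf'_le _ (Finset.mem_univ _))
      rw [hmdef]
      exact Finset.le_inf' _ _ fun r _ => Finset.inf'_le _ (Finset.mem_univ _)
    · apply Finset.le_inf'
      intro r _
      rcases Fin.eq_castSucc_or_eq_last r with ⟨q, rfl⟩ | rfl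
      · exact (min_le_left _ _).trans (hmle q)
      · exact min_le_right _ _
  by_cases hPQ : (∃ r : Fin (n + 1), f r.castSucc = t) ∧
      (∃ r : Fin (n + 1), f r.castSucc = 1 - t)
  · rw [if_pos hPQ]
    have hC : (∃ r : Fin (n + 2), f r = t) ∧ (∃ r : Fin (n + 2), f r = 1 - t) :=
      ⟨(hexists t).2 (Or.inl hPQ.1), (hexists (1 - t)).2 (Or.inl hPQ.2)⟩
    rw [if_pos hC]
    have hD : ¬ (((0 : ℝ) = t ∧ b = 1 - t) ∨ ((0 : ℝ) = 1 - t ∧ b = t)) := by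
      rintro (⟨h, -⟩ | ⟨h, -⟩) <;> linarith
    rw [if_neg hD]
    exact (min_eq_left hbnn).symm
  · rw [if_neg hPQ]
    by_cases hD : (m = t ∧ b = 1 - t) ∨ (m = 1 - t ∧ b = t)
    · rw [if_pos hD]
      have hC : (∃ r : Fin (n + 2), f r = t) ∧ (∃ r : Fin (n + 2), f r = 1 - t) := by
        rcases hD with ⟨hm, hb⟩ | ⟨hm, hb⟩
        · exact ⟨(hexists t).2 (Or.inl ⟨r0, by rw [← hr0', hm]⟩),
            (hexists (1 - t)).2 (Or.inr hb)⟩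
        · exact ⟨(hexists t).2 (Or.inr hb),
            (hexists (1 - t)).2 (Or.inl ⟨r0, by rw [← hr0', hm]⟩)⟩
      rw [if_pos hC]
    · rw [if_neg hD]
      by_cases hC : (∃ r : Fin (n + 2), f r = t) ∧ (∃ r : Fin (n + 2), f r = 1 - t)
      · rw [if_pos hC]
        have hm0 : m = 0 := by
          rcases (hexists t).1 hC.1 with hP | hbt
          · have hQ : ¬ ∃ r : Fin (n + 1), f r.castSucc = 1 - t := fun hQ => hPQ ⟨hP, hQ⟩
            have hb1t : b = 1 - t := by
              rcases (hexists (1 - t)).1 hC.2 with h | h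
              · exact absurd h hQ
              · exact h
            have hmt : m ≠ t := fun h => hD (Or.inl ⟨h, hb1t⟩)
            obtain ⟨r1, hr1⟩ := hP
            have hmlet : m ≤ t := hr1 ▸ hmle r1
            rcases hmvals with h | h | h | h
            · exact h
            · exact absurd h hmt
            · exact absurd ⟨r0, by rw [← hr0', h]⟩ hQ
            · linarith
          · have hQ : ∃ r : Fin (n + 1), f r.castSucc = 1 - t := by
              rcases (hexists (1 - t)).1 hC.2 with h | h
              · exact h
              · exact absurd (hbt.symm.trans h) htne
            have hP : ¬ ∃ r : Fin (n + 1), f r.castSucc = t := fun hP => hPQ ⟨hP, hQ⟩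
            have hm1t : m ≠ 1 - t := fun h => hD (Or.inr ⟨h, hbt⟩)
            obtain ⟨r1, hr1⟩ := hQ
            have hmle1t : m ≤ 1 - t := hr1 ▸ hmle r1
            rcases hmvals with h | h | h | h
            · exact h
            · exact absurd ⟨r0, by rw [← hr0', h]⟩ hP
            · exact absurd h hm1t
            · linarith
        rw [hm0]
        exact (min_eq_left hbnn).symm
      · rw [if_neg hC]
        exact hinf

/-- recursive structure of `Lᴺ` for `N ≥ 2`:
`Lᴺ(i,j;k,l) = 𝔪𝔦𝔫(Lᴺ⁻¹(truncations), L¹(s_N(i), s_N(j); s_N(k), s_N(l)))`. -/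
theorem Ln_recursive (t : ℝ) (ht0 : 0 < t) (ht1 : t < 1) (ht2 : t ≠ 1 / 2) (n : ℕ)
    (i j k l : Fin (n + 2) → Bool) :
    Ln t i j k l =
      mmin t
        (Ln t (fun r : Fin (n + 1) => i r.castSucc) (fun r => j r.castSucc)
          (fun r => k r.castSucc) (fun r => l r.castSucc))
        (L1 t (sproj i (Fin.last (n + 1))) (sproj j (Fin.last (n + 1)))
          (sproj k (Fin.last (n + 1))) (sproj l (Fin.last (n + 1)))) := by
  have key := mminOver_recursive t ht0 ht1 ht2 n
    (fun r => L1 t (sproj i r) (sproj j r) (sproj k r) (sproj l r))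
    (fun r => L1_mem t _ _ _ _)
  unfold Ln
  rw [key]
  congr 1
  congr 1
  funext r
  rw [sproj_castSucc i r, sproj_castSucc j r, sproj_castSucc k r, sproj_castSucc l r]
end

section
/- Mod 2 erasure: let π = {{1,…,r_1}, {r_1+1,…,r_2}, …, {r_{m−1}+1,…,r_m}} be an interval partition of {1,…,n} with r_m = n, and let g_π : {0,1}^n → {0,1}^m be the map sending x to the vector whose k-th coordinate is (∑_{i=r_{k−1}+1}^{r_k} x_i) mod 2. Fix 𝔦,𝔧,𝔨,𝔩 ∈ {0,1}^m. For all i, j ∈ {0,1}^n with g_π(i) = 𝔦 and g_π(j) = 𝔧, the sum of L^n(i,j;k,l) over all k, l ∈ {0,1}^n with g_π(k) = 𝔨 and g_π(l) = 𝔩 equals L^m(𝔦,𝔧;𝔨,𝔩). -/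
open Finset

/-- The map `g_π` associated with an interval partition whose block boundaries are
given by `e : Fin (m + 2) → ℕ` (with `e 0 = 0`, `e` strictly monotone and
`e (last) = n + 1`): the `k`-th coordinate is the parity of the sum of the
coordinates of `x` in the `k`-th block. -/
def gpart {n m : ℕ} (e : Fin (m + 2) → ℕ) (x : Fin (n + 1) → Bool) (k : Fin (m + 1)) :
    Bool :=
  decide ((∑ i ∈ Finset.univ.filter
      (fun i : Fin (n + 1) => e k.castSucc ≤ i.val ∧ i.val < e k.succ),
      (if x i then (1 : ℕ) else 0)) % 2 = 1)




/-- Partial sum of the first `s` bits. -/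
def Sb {N : ℕ} (x : Fin N → Bool) (s : ℕ) : ℕ :=
  ∑ i ∈ Finset.univ.filter (fun i : Fin N => i.val < s), (if x i then (1 : ℕ) else 0)

/-- Parity of the first `s` bits. -/
def par {N : ℕ} (x : Fin N → Bool) (s : ℕ) : Bool := decide (Sb x s % 2 = 1)

lemma Sb_zero {N : ℕ} (x : Fin N → Bool) : Sb x 0 = 0 := by
  simp [Sb]

lemma par_zero {N : ℕ} (x : Fin N → Bool) : par x 0 = false := by
  simp [par, Sb_zero]

lemma parity_add (u v : ℕ) :
    decide ((u + v) % 2 = 1) = xor (decide (u % 2 = 1)) (decide (v % 2 = 1)) := by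
  rcases Nat.mod_two_eq_zero_or_one u with h1 | h1 <;>
  rcases Nat.mod_two_eq_zero_or_one v with h2 | h2 <;>
    simp [Nat.add_mod, h1, h2]

lemma Sb_succ {N : ℕ} (x : Fin N → Bool) (s : ℕ) (hs : s < N) :
    Sb x (s + 1) = Sb x s + (if x ⟨s, hs⟩ then 1 else 0) := by
  have h : Finset.univ.filter (fun i : Fin N => i.val < s + 1) =
      insert ⟨s, hs⟩ (Finset.univ.filter (fun i : Fin N => i.val < s)) := by
    ext i; simp [Fin.ext_iff]; omega
  rw [Sb, h, Finset.sum_insert (by simp)]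
  rw [Sb]; ring

lemma par_succ {N : ℕ} (x : Fin N → Bool) (s : ℕ) (hs : s < N) :
    par x (s + 1) = xor (par x s) (x ⟨s, hs⟩) := by
  rw [par, Sb_succ x s hs, parity_add, par]
  cases x ⟨s, hs⟩ <;> simp

lemma sproj_eq_par {N : ℕ} (x : Fin (N + 1) → Bool) (r : Fin (N + 1)) :
    sproj x r = par x (r.val + 1) := by
  rw [sproj, par, Sb]
  have h : (Finset.univ.filter (fun m : Fin (N+1) => m ≤ r)) =
      (Finset.univ.filter (fun i : Fin (N+1) => i.val < r.val + 1)) := by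
    ext m; simp only [Finset.mem_filter, Finset.mem_univ, true_and, Fin.le_def]; omega
  rw [h]

/-- Inverse of the prefix-parity map. -/
def dmap {N : ℕ} (c : Fin (N + 1) → Bool) (r : Fin (N + 1)) : Bool :=
  if h : r.val = 0 then c r else xor (c ⟨r.val - 1, by omega⟩) (c r)

lemma par_one {N : ℕ} (x : Fin (N + 1) → Bool) : par x 1 = x ⟨0, Nat.succ_pos N⟩ := by
  have := par_succ x 0 (Nat.succ_pos N)
  rw [par_zero] at this
  simpa using this

lemma dmap_sproj {N : ℕ} (x : Fin (N + 1) → Bool) :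
    dmap (fun r => sproj x r) = x := by
  funext r
  rcases r with ⟨v, hv⟩
  rcases v with _ | v
  · simp [dmap, sproj_eq_par, par_one]
  · have h1 : sproj x ⟨v + 1, hv⟩ = xor (par x (v+1)) (x ⟨v+1, hv⟩) := by
      rw [sproj_eq_par]; exact par_succ x (v+1) hv
    have h2 : sproj x ⟨v, by omega⟩ = par x (v + 1) := by rw [sproj_eq_par]
    simp only [dmap]
    rw [dif_neg (by simp)]
    rw [show ((⟨v + 1 - 1, by omega⟩ : Fin (N+1))) = ⟨v, by omega⟩ by simp, h1, h2]
    cases par x (v+1) <;> simp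

lemma sproj_dmap_aux {N : ℕ} (c : Fin (N + 1) → Bool) :
    ∀ v (h : v < N + 1), par (dmap c) (v + 1) = c ⟨v, h⟩ := by
  intro v
  induction v with
  | zero => intro h; rw [par_one]; simp [dmap]
  | succ w ih =>
    intro h
    rw [par_succ (dmap c) (w+1) h, ih (by omega)]
    simp only [dmap]
    rw [dif_neg (by simp)]
    rw [show ((⟨w + 1 - 1, by omega⟩ : Fin (N+1))) = ⟨w, by omega⟩ by simp]
    cases c ⟨w, by omega⟩ <;> simp

lemma sproj_dmap {N : ℕ} (c : Fin (N + 1) → Bool) :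
    (fun r => sproj (dmap c) r) = c := by
  funext r
  rw [sproj_eq_par, sproj_dmap_aux c r.val r.isLt]

lemma Sb_split {N : ℕ} (x : Fin N → Bool) (a b : ℕ) (hab : a ≤ b) :
    Sb x b = Sb x a + ∑ i ∈ Finset.univ.filter (fun i : Fin N => a ≤ i.val ∧ i.val < b),
      (if x i then (1 : ℕ) else 0) := by
  rw [Sb, Sb, ← Finset.sum_union]
  · congr 1
    ext i
    simp only [Finset.mem_filter, Finset.mem_univ, true_and, Finset.mem_union]
    omega
  · rw [Finset.disjoint_left]
    intro i hi hi'
    simp only [Finset.mem_filter, Finset.mem_univ, true_and] at hi hi'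
    omega

/-- `gpart` block parity as xor of prefix parities. -/
lemma gpart_eq {n m : ℕ} (e : Fin (m + 2) → ℕ) (hmono : StrictMono e)
    (x : Fin (n + 1) → Bool) (k : Fin (m + 1)) :
    gpart e x k = xor (par x (e k.castSucc)) (par x (e k.succ)) := by
  have hab : e k.castSucc ≤ e k.succ := hmono.monotone (Fin.castSucc_le_succ k)
  have h := Sb_split x (e k.castSucc) (e k.succ) hab
  rw [gpart, par, par, h, parity_add]
  cases decide (Sb x (e k.castSucc) % 2 = 1) <;> simp

lemma gpart_iff {n m : ℕ} (e : Fin (m + 2) → ℕ) (he0 : e 0 = 0) (hmono : StrictMono e)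
    (x : Fin (n + 1) → Bool) (f : Fin (m + 1) → Bool) :
    gpart e x = f ↔ ∀ κ : Fin (m + 1), par x (e κ.succ) = par f (κ.val + 1) := by
  have key : ∀ κ : Fin (m + 1),
      par x (e κ.succ) = xor (par x (e κ.castSucc)) (gpart e x κ) := by
    intro κ; rw [gpart_eq e hmono x κ]; cases par x (e κ.castSucc) <;> simp
  constructor
  · intro h
    have fwd : ∀ v (hv : v < m + 1),
        par x (e (⟨v, hv⟩ : Fin (m + 1)).succ) = par f (v + 1) := by
      intro v
      induction v with
      | zero =>
        intro hv
        rw [key ⟨0, hv⟩, show ((⟨0, hv⟩ : Fin (m + 1)).castSucc) = 0 from rfl, he0,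
          par_zero, h, par_one]
        simp
      | succ w ih =>
        intro hv
        have hcs : ((⟨w + 1, hv⟩ : Fin (m + 1)).castSucc) =
            ((⟨w, by omega⟩ : Fin (m + 1)).succ) := by
          apply Fin.ext; simp
        rw [key ⟨w + 1, hv⟩, hcs, ih (by omega), h, par_succ f (w + 1) hv]
    intro κ; exact fwd κ.val κ.isLt
  · intro h
    funext κ
    rcases κ with ⟨v, hv⟩
    rw [gpart_eq e hmono x ⟨v, hv⟩]
    rcases v with _ | w
    · rw [show ((⟨0, hv⟩ : Fin (m + 1)).castSucc) = 0 from rfl, he0, par_zero,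
        h ⟨0, hv⟩, par_one]
      simp
    · have hcs : ((⟨w + 1, hv⟩ : Fin (m + 1)).castSucc) =
          ((⟨w, by omega⟩ : Fin (m + 1)).succ) := by
        apply Fin.ext; simp
      rw [hcs, h ⟨w, by omega⟩, h ⟨w + 1, hv⟩, par_succ f (w + 1) hv]
      cases par f (w + 1) <;> simp

section MMin
variable {t : ℝ} (ht0 : 0 < t) (ht1 : t < 1) (ht2 : t ≠ 1 / 2)

lemma L1_nonneg (ht0 : 0 < t) (ht1 : t < 1) (a b c d : Bool) : 0 ≤ L1 t a b c d := by
  cases a <;> cases b <;> cases c <;> cases d <;> simp [L1] <;> linarith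

lemma L1_val_cases (a b c d : Bool) :
    L1 t a b c d = 0 ∨ ((c = a ∧ d = b) ∨ (a = true ∧ b = true ∧ c = false ∧ d = false)) := by
  cases a <;> cases b <;> cases c <;> cases d <;> simp [L1]

lemma L1_zero_of {a b c d : Bool}
    (h : ¬((c = a ∧ d = b) ∨ (a = true ∧ b = true ∧ c = false ∧ d = false))) :
    L1 t a b c d = 0 := by
  rcases L1_val_cases (t := t) a b c d with h' | h'
  · exact h'
  · exact absurd h' h

lemma L1_diag (a b : Bool) : L1 t a b a b = if a && b then t else 1 := by
  cases a <;> cases b <;> simp [L1]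

lemma L1_ttff : L1 t true true false false = 1 - t := rfl

lemma L1_eq_t_iff (ht0 : 0 < t) (ht1 : t < 1) (ht2 : t ≠ 1 / 2) (a b c d : Bool) :
    L1 t a b c d = t ↔ (a = true ∧ b = true ∧ c = true ∧ d = true) := by
  have h1 : (1 : ℝ) - t ≠ t := fun h => ht2 (by linarith)
  have h2 : (1 : ℝ) ≠ t := by linarith
  have h3 : (0 : ℝ) ≠ t := by linarith
  cases a <;> cases b <;> cases c <;> cases d <;> simp [L1, h1, h2, h3]

lemma L1_eq_onesub_iff (ht0 : 0 < t) (ht1 : t < 1) (ht2 : t ≠ 1 / 2) (a b c d : Bool) :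
    L1 t a b c d = 1 - t ↔ (a = true ∧ b = true ∧ c = false ∧ d = false) := by
  have h1 : t ≠ 1 - t := fun h => ht2 (by linarith)
  have h2 : (1 : ℝ) ≠ 1 - t := by intro h; linarith
  have h3 : (0 : ℝ) ≠ 1 - t := by intro h; linarith
  cases a <;> cases b <;> cases c <;> cases d <;> simp [L1, h1, h2, h3]

lemma mminOver_eq_zero_of {n : ℕ} {f : Fin (n + 1) → ℝ} (hf : ∀ r, 0 ≤ f r)
    (r₀ : Fin (n + 1)) (h0 : f r₀ = 0) : mminOver t f = 0 := by
  rw [mminOver]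
  split
  · rfl
  · refine le_antisymm ?_ ?_
    · exact le_trans (Finset.inf'_le _ (Finset.mem_univ r₀)) (le_of_eq h0)
    · exact Finset.le_inf' _ _ (fun r _ => hf r)

lemma mminOver_eq_zero_of_both {n : ℕ} {f : Fin (n + 1) → ℝ}
    (h1 : ∃ r, f r = t) (h2 : ∃ r, f r = 1 - t) : mminOver t f = 0 := by
  rw [mminOver, if_pos ⟨h1, h2⟩]

lemma mminOver_eq_const {n : ℕ} {f : Fin (n + 1) → ℝ} {v : ℝ}
    (hv1 : v ≤ 1) (hall : ∀ r, f r = v ∨ f r = 1) (r₀ : Fin (n + 1)) (h0 : f r₀ = v)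
    (hnb : ¬((∃ r, f r = t) ∧ (∃ r, f r = 1 - t))) : mminOver t f = v := by
  rw [mminOver, if_neg hnb]
  refine le_antisymm ?_ ?_
  · exact le_trans (Finset.inf'_le _ (Finset.mem_univ r₀)) (le_of_eq h0)
  · refine Finset.le_inf' _ _ (fun r _ => ?_)
    rcases hall r with h | h <;> rw [h]
    exact hv1

lemma mminOver_eq_one {n : ℕ} (ht0 : 0 < t) (ht1 : t < 1) {f : Fin (n + 1) → ℝ}
    (hall : ∀ r, f r = 1) : mminOver t f = 1 := by
  refine mminOver_eq_const le_rfl (fun r => Or.inr (hall r)) ⟨0, Nat.succ_pos n⟩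
    (hall _) ?_
  rintro ⟨⟨r, hr⟩, -⟩
  rw [hall r] at hr
  linarith

lemma mminOver_ne_zero_imp {n : ℕ} {f : Fin (n + 1) → ℝ} (hf : ∀ r, 0 ≤ f r)
    (h : mminOver t f ≠ 0) :
    (∀ r, f r ≠ 0) ∧ ¬((∃ r, f r = t) ∧ (∃ r, f r = 1 - t)) := by
  constructor
  · intro r hr; exact h (mminOver_eq_zero_of hf r hr)
  · intro hb; exact h (mminOver_eq_zero_of_both hb.1 hb.2)

end MMin

/-- Core erasure lemma: summing over configurations with prescribed values at the
positions `R κ`. -/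
lemma core_erasure (t : ℝ) (ht0 : 0 < t) (ht1 : t < 1) (ht2 : t ≠ 1 / 2)
    {n m : ℕ} (a b : Fin (n + 1) → Bool) (R : Fin (m + 1) → Fin (n + 1))
    (α β : Fin (m + 1) → Bool) :
    ∑ q ∈ Finset.univ.filter (fun q : (Fin (n + 1) → Bool) × (Fin (n + 1) → Bool) =>
        (∀ κ, q.1 (R κ) = α κ) ∧ (∀ κ, q.2 (R κ) = β κ)),
      mminOver t (fun r => L1 t (a r) (b r) (q.1 r) (q.2 r))
    = mminOver t (fun κ => L1 t (a (R κ)) (b (R κ)) (α κ) (β κ)) := by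
  classical
  set C := Finset.univ.filter (fun q : (Fin (n + 1) → Bool) × (Fin (n + 1) → Bool) =>
        (∀ κ, q.1 (R κ) = α κ) ∧ (∀ κ, q.2 (R κ) = β κ)) with hC
  have hnn : ∀ (q : (Fin (n + 1) → Bool) × (Fin (n + 1) → Bool)) (r : Fin (n + 1)),
      (0:ℝ) ≤ L1 t (a r) (b r) (q.1 r) (q.2 r) := fun q r => L1_nonneg ht0 ht1 _ _ _ _
  have hFg : ∀ q ∈ C, ∀ κ,
      L1 t (a (R κ)) (b (R κ)) (q.1 (R κ)) (q.2 (R κ))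
        = L1 t (a (R κ)) (b (R κ)) (α κ) (β κ) := by
    intro q hq κ
    rw [hC, Finset.mem_filter] at hq
    rw [hq.2.1 κ, hq.2.2 κ]
  by_cases h0 : ∃ κ, L1 t (a (R κ)) (b (R κ)) (α κ) (β κ) = 0
  · obtain ⟨κ₀, hκ₀⟩ := h0
    rw [show (mminOver t fun κ => L1 t (a (R κ)) (b (R κ)) (α κ) (β κ)) = 0 from
      mminOver_eq_zero_of (fun κ => L1_nonneg ht0 ht1 _ _ _ _) κ₀ hκ₀]
    refine Finset.sum_eq_zero (fun q hq => ?_)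
    exact mminOver_eq_zero_of (hnn q) (R κ₀) (by rw [hFg q hq κ₀]; exact hκ₀)
  push_neg at h0
  have hpat : ∀ κ, (α κ = a (R κ) ∧ β κ = b (R κ)) ∨
      (a (R κ) = true ∧ b (R κ) = true ∧ α κ = false ∧ β κ = false) := by
    intro κ
    rcases L1_val_cases (t := t) (a (R κ)) (b (R κ)) (α κ) (β κ) with h | h | h
    · exact absurd h (h0 κ)
    · exact Or.inl h
    · exact Or.inr h
  by_cases hboth : (∃ κ, L1 t (a (R κ)) (b (R κ)) (α κ) (β κ) = t) ∧
      (∃ κ, L1 t (a (R κ)) (b (R κ)) (α κ) (β κ) = 1 - t)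
  · rw [mminOver_eq_zero_of_both hboth.1 hboth.2]
    refine Finset.sum_eq_zero (fun q hq => ?_)
    obtain ⟨⟨κ₁, h₁⟩, ⟨κ₂, h₂⟩⟩ := hboth
    exact mminOver_eq_zero_of_both ⟨R κ₁, by rw [hFg q hq κ₁]; exact h₁⟩
      ⟨R κ₂, by rw [hFg q hq κ₂]; exact h₂⟩
  by_cases hT : ∃ κ, L1 t (a (R κ)) (b (R κ)) (α κ) (β κ) = t
  · -- all prescribed values in {t, 1}; unique nonzero configuration (a, b), value t
    have h1t : ∀ κ, L1 t (a (R κ)) (b (R κ)) (α κ) (β κ) ≠ 1 - t := by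
      intro κ hκ; exact hboth ⟨hT, ⟨κ, hκ⟩⟩
    obtain ⟨κ₁, hκ₁⟩ := hT
    rw [L1_eq_t_iff ht0 ht1 ht2] at hκ₁
    have hRHS : mminOver t (fun κ => L1 t (a (R κ)) (b (R κ)) (α κ) (β κ)) = t := by
      refine mminOver_eq_const ht1.le (fun κ => ?_) κ₁
        (by rw [hκ₁.1, hκ₁.2.1, hκ₁.2.2.1, hκ₁.2.2.2]; rfl) (fun h => hboth h)
      rcases hpat κ with h | h
      · rw [h.1, h.2, L1_diag]
        by_cases hab : (a (R κ) && b (R κ)) = true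
        · rw [if_pos hab]; left; rfl
        · rw [if_neg hab]; right; rfl
      · exact absurd (by rw [h.1, h.2.1, h.2.2.1, h.2.2.2]; rfl) (h1t κ)
    rw [hRHS]
    have hmemab : ((a, b) : (Fin (n + 1) → Bool) × (Fin (n + 1) → Bool)) ∈ C := by
      rw [hC, Finset.mem_filter]
      refine ⟨Finset.mem_univ _, fun κ => ?_, fun κ => ?_⟩
      · rcases hpat κ with h | h
        · exact h.1.symm
        · exact absurd (by rw [h.1, h.2.1, h.2.2.1, h.2.2.2]; rfl) (h1t κ)
      · rcases hpat κ with h | h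
        · exact h.2.symm
        · exact absurd (by rw [h.1, h.2.1, h.2.2.1, h.2.2.2]; rfl) (h1t κ)
    have hothers : ∀ q ∈ C, q ≠ (a, b) →
        mminOver t (fun r => L1 t (a r) (b r) (q.1 r) (q.2 r)) = 0 := by
      intro q hq hne
      by_contra hne0
      obtain ⟨hnz, hnb⟩ := mminOver_ne_zero_imp (hnn q) hne0
      have hqt : L1 t (a (R κ₁)) (b (R κ₁)) (q.1 (R κ₁)) (q.2 (R κ₁)) = t := by
        rw [hFg q hq κ₁, hκ₁.1, hκ₁.2.1, hκ₁.2.2.1, hκ₁.2.2.2]; rfl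
      have hno1t : ∀ r, L1 t (a r) (b r) (q.1 r) (q.2 r) ≠ 1 - t := by
        intro r hr; exact hnb ⟨⟨R κ₁, hqt⟩, ⟨r, hr⟩⟩
      apply hne
      have key : ∀ r, q.1 r = a r ∧ q.2 r = b r := by
        intro r
        rcases L1_val_cases (t := t) (a r) (b r) (q.1 r) (q.2 r) with h | h | h
        · exact absurd h (hnz r)
        · exact h
        · exact absurd (by rw [h.2.2.1, h.2.2.2, h.1, h.2.1]; rfl) (hno1t r)
      exact Prod.ext (funext fun r => (key r).1) (funext fun r => (key r).2)
    rw [Finset.sum_eq_single_of_mem _ hmemab hothers]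
    show mminOver t (fun r => L1 t (a r) (b r) (a r) (b r)) = t
    refine mminOver_eq_const ht1.le (fun r => ?_) (R κ₁)
      (by rw [hκ₁.1, hκ₁.2.1]; rfl) ?_
    · rw [L1_diag]
      by_cases hab : (a r && b r) = true
      · rw [if_pos hab]; left; rfl
      · rw [if_neg hab]; right; rfl
    · rintro ⟨-, ⟨r, hr⟩⟩
      rw [L1_eq_onesub_iff ht0 ht1 ht2] at hr
      obtain ⟨h1, h2, h3, h4⟩ := hr
      have h3' : a r = false := h3
      rw [h1] at h3'
      simp at h3' 
  -- no prescribed value equals t from here on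
  have hT' : ∀ κ, L1 t (a (R κ)) (b (R κ)) (α κ) (β κ) ≠ t := by push_neg at hT; exact hT
  have bool1 : ∀ x y : Bool, ¬(x = true ∧ y = true) → (x && !y) = x := by decide
  by_cases hU : ∃ κ, L1 t (a (R κ)) (b (R κ)) (α κ) (β κ) = 1 - t
  · obtain ⟨κ₁, hκ₁⟩ := hU
    rw [L1_eq_onesub_iff ht0 ht1 ht2] at hκ₁
    have hRHS : mminOver t (fun κ => L1 t (a (R κ)) (b (R κ)) (α κ) (β κ)) = 1 - t := by
      refine mminOver_eq_const (by linarith) (fun κ => ?_) κ₁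
        (by rw [hκ₁.1, hκ₁.2.1, hκ₁.2.2.1, hκ₁.2.2.2]; rfl) (fun h => hboth h)
      rcases hpat κ with h | h
      · by_cases hab : (a (R κ) && b (R κ)) = true
        · exact absurd (by rw [h.1, h.2, L1_diag, if_pos hab]) (hT' κ)
        · right; rw [h.1, h.2, L1_diag, if_neg hab]
      · left; rw [h.1, h.2.1, h.2.2.1, h.2.2.2]; rfl
    rw [hRHS]
    set B : (Fin (n + 1) → Bool) × (Fin (n + 1) → Bool) :=
      (fun r => a r && !(b r), fun r => b r && !(a r)) with hB
    have hmemB : B ∈ C := by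
      rw [hC, Finset.mem_filter]
      refine ⟨Finset.mem_univ _, fun κ => ?_, fun κ => ?_⟩ <;>
        rcases hpat κ with h | h
      · have hab : ¬(a (R κ) = true ∧ b (R κ) = true) := by
          intro hh
          exact hT' κ (by rw [h.1, h.2, hh.1, hh.2]; rfl)
        show (a (R κ) && !(b (R κ))) = α κ
        rw [h.1]; exact bool1 _ _ hab
      · show (a (R κ) && !(b (R κ))) = α κ
        rw [h.1, h.2.1, h.2.2.1]; rfl
      · have hab : ¬(a (R κ) = true ∧ b (R κ) = true) := by
          intro hh
          exact hT' κ (by rw [h.1, h.2, hh.1, hh.2]; rfl)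
        show (b (R κ) && !(a (R κ))) = β κ
        rw [h.2]; exact bool1 _ _ (fun hh => hab ⟨hh.2, hh.1⟩)
      · show (b (R κ) && !(a (R κ))) = β κ
        rw [h.2.1, h.1, h.2.2.2]; rfl
    have hothers : ∀ q ∈ C, q ≠ B →
        mminOver t (fun r => L1 t (a r) (b r) (q.1 r) (q.2 r)) = 0 := by
      intro q hq hne
      by_contra hne0
      obtain ⟨hnz, hnb⟩ := mminOver_ne_zero_imp (hnn q) hne0
      have hq1t : L1 t (a (R κ₁)) (b (R κ₁)) (q.1 (R κ₁)) (q.2 (R κ₁)) = 1 - t := by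
        rw [hFg q hq κ₁, hκ₁.1, hκ₁.2.1, hκ₁.2.2.1, hκ₁.2.2.2]; rfl
      have hnot : ∀ r, L1 t (a r) (b r) (q.1 r) (q.2 r) ≠ t := by
        intro r hr; exact hnb ⟨⟨r, hr⟩, ⟨R κ₁, hq1t⟩⟩
      apply hne
      have key : ∀ r, q.1 r = (a r && !(b r)) ∧ q.2 r = (b r && !(a r)) := by
        intro r
        rcases L1_val_cases (t := t) (a r) (b r) (q.1 r) (q.2 r) with h | h | h
        · exact absurd h (hnz r)
        · by_cases hab : a r = true ∧ b r = true
          · exact absurd (by rw [h.1, h.2, hab.1, hab.2]; rfl) (hnot r)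
          · exact ⟨by rw [h.1]; exact (bool1 _ _ hab).symm,
              by rw [h.2]; exact (bool1 _ _ (fun hh => hab ⟨hh.2, hh.1⟩)).symm⟩
        · refine ⟨?_, ?_⟩ <;> rw [h.1, h.2.1] <;> [exact h.2.2.1; exact h.2.2.2]
      exact Prod.ext (funext fun r => (key r).1) (funext fun r => (key r).2)
    rw [Finset.sum_eq_single_of_mem _ hmemB hothers]
    show mminOver t (fun r => L1 t (a r) (b r) (a r && !(b r)) (b r && !(a r))) = 1 - t
    refine mminOver_eq_const (by linarith) (fun r => ?_) (R κ₁)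
      (by rw [hκ₁.1, hκ₁.2.1]; rfl) ?_
    · cases ha : a r <;> cases hb : b r <;> simp [L1]
    · rintro ⟨⟨r, hrt⟩, -⟩
      rw [L1_eq_t_iff ht0 ht1 ht2] at hrt
      have h3 := hrt.2.2.1
      rw [hrt.1, hrt.2.1] at h3
      simp at h3
  · -- all prescribed values equal 1
    have hU' : ∀ κ, L1 t (a (R κ)) (b (R κ)) (α κ) (β κ) ≠ 1 - t := by
      push_neg at hU; exact hU
    have hdiag : ∀ κ, ¬(a (R κ) = true ∧ b (R κ) = true) := by
      intro κ hh
      rcases hpat κ with h | h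
      · exact hT' κ (by rw [h.1, h.2, hh.1, hh.2]; rfl)
      · exact hU' κ (by rw [h.1, h.2.1, h.2.2.1, h.2.2.2]; rfl)
    have hRHS : mminOver t (fun κ => L1 t (a (R κ)) (b (R κ)) (α κ) (β κ)) = 1 := by
      refine mminOver_eq_one ht0 ht1 (fun κ => ?_)
      rcases hpat κ with h | h
      · have hne' : ¬((a (R κ) && b (R κ)) = true) := by
          rw [Bool.and_eq_true]; exact hdiag κ
        rw [h.1, h.2, L1_diag, if_neg hne']
      · exact absurd (by rw [h.1, h.2.1, h.2.2.1, h.2.2.2]; rfl) (hU' κ)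
    rw [hRHS]
    have hmemA : ((a, b) : (Fin (n + 1) → Bool) × (Fin (n + 1) → Bool)) ∈ C := by
      rw [hC, Finset.mem_filter]
      refine ⟨Finset.mem_univ _, fun κ => ?_, fun κ => ?_⟩ <;> rcases hpat κ with h | h
      · exact h.1.symm
      · exact absurd ⟨h.1, h.2.1⟩ (hdiag κ)
      · exact h.2.symm
      · exact absurd ⟨h.1, h.2.1⟩ (hdiag κ)
    by_cases hfree : ∃ r, a r = true ∧ b r = true
    · obtain ⟨r₀, hr₀⟩ := hfree
      set B : (Fin (n + 1) → Bool) × (Fin (n + 1) → Bool) :=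
        (fun r => a r && !(b r), fun r => b r && !(a r)) with hB
      have hmemB : B ∈ C := by
        rw [hC, Finset.mem_filter]
        refine ⟨Finset.mem_univ _, fun κ => ?_, fun κ => ?_⟩ <;> rcases hpat κ with h | h
        · show (a (R κ) && !(b (R κ))) = α κ
          rw [h.1]; exact bool1 _ _ (hdiag κ)
        · exact absurd ⟨h.1, h.2.1⟩ (hdiag κ)
        · show (b (R κ) && !(a (R κ))) = β κ
          rw [h.2]; exact bool1 _ _ (fun hh => hdiag κ ⟨hh.2, hh.1⟩)
        · exact absurd ⟨h.1, h.2.1⟩ (hdiag κ)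
      have hne : ((a, b) : (Fin (n + 1) → Bool) × (Fin (n + 1) → Bool)) ≠ B := by
        intro hEq
        have h1 := congrFun (congrArg Prod.fst hEq) r₀
        rw [hB] at h1
        simp only at h1
        rw [hr₀.1, hr₀.2] at h1
        simp at h1
      have hvalA : mminOver t (fun r => L1 t (a r) (b r) (a r) (b r)) = t := by
        refine mminOver_eq_const ht1.le (fun r => ?_) r₀
          (by rw [hr₀.1, hr₀.2]; rfl) ?_
        · rw [L1_diag]
          by_cases hab : (a r && b r) = true
          · rw [if_pos hab]; left; rfl
          · rw [if_neg hab]; right; rfl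
        · rintro ⟨-, ⟨r, hr⟩⟩
          rw [L1_eq_onesub_iff ht0 ht1 ht2] at hr
          have h3 := hr.2.2.1
          rw [hr.1] at h3
          simp at h3
      have hvalB : mminOver t
          (fun r => L1 t (a r) (b r) (a r && !(b r)) (b r && !(a r))) = 1 - t := by
        refine mminOver_eq_const (by linarith) (fun r => ?_) r₀
          (by rw [hr₀.1, hr₀.2]; rfl) ?_
        · cases ha : a r <;> cases hb : b r <;> simp [L1]
        · rintro ⟨⟨r, hrt⟩, -⟩
          rw [L1_eq_t_iff ht0 ht1 ht2] at hrt
          have h3 := hrt.2.2.1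
          rw [hrt.1, hrt.2.1] at h3
          simp at h3
      have hothers : ∀ q ∈ C, q ≠ (a, b) ∧ q ≠ B →
          mminOver t (fun r => L1 t (a r) (b r) (q.1 r) (q.2 r)) = 0 := by
        intro q hq ⟨hneA, hneB⟩
        by_contra hne0
        obtain ⟨hnz, hnb⟩ := mminOver_ne_zero_imp (hnn q) hne0
        have key : ∀ r, (q.1 r = a r ∧ q.2 r = b r) ∨
            (a r = true ∧ b r = true ∧ q.1 r = false ∧ q.2 r = false) := by
          intro r
          rcases L1_val_cases (t := t) (a r) (b r) (q.1 r) (q.2 r) with h | h | h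
          · exact absurd h (hnz r)
          · exact Or.inl h
          · exact Or.inr h
        by_cases hall' : ∀ r, q.1 r = a r ∧ q.2 r = b r
        · exact hneA (Prod.ext (funext fun r => (hall' r).1) (funext fun r => (hall' r).2))
        · push_neg at hall'
          obtain ⟨r₁, hr₁⟩ := hall'
          have hpat1 : a r₁ = true ∧ b r₁ = true ∧ q.1 r₁ = false ∧ q.2 r₁ = false := by
            rcases key r₁ with h | h
            · exact absurd h.2 (hr₁ h.1)
            · exact h
          have h1tval : L1 t (a r₁) (b r₁) (q.1 r₁) (q.2 r₁) = 1 - t := by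
            rw [hpat1.1, hpat1.2.1, hpat1.2.2.1, hpat1.2.2.2]; rfl
          have hnot : ∀ r, L1 t (a r) (b r) (q.1 r) (q.2 r) ≠ t := by
            intro r hr; exact hnb ⟨⟨r, hr⟩, ⟨r₁, h1tval⟩⟩
          apply hneB
          have key2 : ∀ r, q.1 r = (a r && !(b r)) ∧ q.2 r = (b r && !(a r)) := by
            intro r
            rcases key r with h | h
            · by_cases hab : a r = true ∧ b r = true
              · exact absurd (by rw [h.1, h.2, hab.1, hab.2]; rfl) (hnot r)
              · exact ⟨by rw [h.1]; exact (bool1 _ _ hab).symm,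
                  by rw [h.2]; exact (bool1 _ _ (fun hh => hab ⟨hh.2, hh.1⟩)).symm⟩
            · refine ⟨?_, ?_⟩ <;> rw [h.1, h.2.1] <;> [exact h.2.2.1; exact h.2.2.2]
          exact Prod.ext (funext fun r => (key2 r).1) (funext fun r => (key2 r).2)
      rw [Finset.sum_eq_add_of_mem _ _ hmemA hmemB hne hothers]
      show mminOver t (fun r => L1 t (a r) (b r) (a r) (b r)) +
        mminOver t (fun r => L1 t (a r) (b r) (a r && !(b r)) (b r && !(a r))) = 1
      rw [hvalA, hvalB]; ring
    · -- no free positions at all: unique configuration (a, b) with weight 1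
      have hothers : ∀ q ∈ C, q ≠ (a, b) →
          mminOver t (fun r => L1 t (a r) (b r) (q.1 r) (q.2 r)) = 0 := by
        intro q hq hne
        by_contra hne0
        obtain ⟨hnz, -⟩ := mminOver_ne_zero_imp (hnn q) hne0
        apply hne
        have key : ∀ r, q.1 r = a r ∧ q.2 r = b r := by
          intro r
          rcases L1_val_cases (t := t) (a r) (b r) (q.1 r) (q.2 r) with h | h | h
          · exact absurd h (hnz r)
          · exact h
          · exact absurd ⟨h.1, h.2.1⟩ (fun hh => hfree ⟨r, hh⟩)
        exact Prod.ext (funext fun r => (key r).1) (funext fun r => (key r).2)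
      rw [Finset.sum_eq_single_of_mem _ hmemA hothers]
      show mminOver t (fun r => L1 t (a r) (b r) (a r) (b r)) = 1
      refine mminOver_eq_one ht0 ht1 (fun r => ?_)
      have hne' : ¬((a r && b r) = true) := by
        rw [Bool.and_eq_true]; exact fun hh => hfree ⟨r, hh⟩
      rw [L1_diag, if_neg hne']
/-- mod 2 erasure. Summing `Lⁿ` over outputs with fixed image under
`g_π` recovers the corresponding entry of `Lᵐ`. -/
theorem Ln_mod2_erasure (t : ℝ) (ht0 : 0 < t) (ht1 : t < 1) (ht2 : t ≠ 1 / 2)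
    (m n : ℕ) (e : Fin (m + 2) → ℕ)
    (he0 : e 0 = 0) (hen : e (Fin.last (m + 1)) = n + 1) (hmono : StrictMono e)
    (fi fj fk fl : Fin (m + 1) → Bool)
    (i j : Fin (n + 1) → Bool)
    (hi : gpart e i = fi) (hj : gpart e j = fj) :
    ∑ p ∈ Finset.univ.filter
        (fun p : (Fin (n + 1) → Bool) × (Fin (n + 1) → Bool) =>
          gpart e p.1 = fk ∧ gpart e p.2 = fl),
        Ln t i j p.1 p.2 = Ln t fi fj fk fl := by
  classical
  have hpos : ∀ κ : Fin (m + 1), 0 < e κ.succ := by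
    intro κ
    have h := hmono (Fin.succ_pos κ)
    rw [he0] at h
    exact h
  have hle : ∀ κ : Fin (m + 1), e κ.succ ≤ n + 1 := by
    intro κ
    rw [← hen]
    exact hmono.monotone (Fin.le_last κ.succ)
  set R : Fin (m + 1) → Fin (n + 1) :=
    fun κ => ⟨e κ.succ - 1, by have := hpos κ; have := hle κ; omega⟩ with hR
  have hRe : ∀ κ, (R κ).val + 1 = e κ.succ := by
    intro κ
    have := hpos κ
    simp only [hR]
    omega
  have hcond : ∀ (x : Fin (n + 1) → Bool) (f : Fin (m + 1) → Bool),
      gpart e x = f ↔ ∀ κ, sproj x (R κ) = par f (κ.val + 1) := by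
    intro x f
    rw [gpart_iff e he0 hmono x f]
    refine forall_congr' (fun κ => ?_)
    rw [sproj_eq_par, hRe κ]
  have step1 : ∑ p ∈ Finset.univ.filter
        (fun p : (Fin (n + 1) → Bool) × (Fin (n + 1) → Bool) =>
          gpart e p.1 = fk ∧ gpart e p.2 = fl),
        Ln t i j p.1 p.2
      = ∑ q ∈ Finset.univ.filter
          (fun q : (Fin (n + 1) → Bool) × (Fin (n + 1) → Bool) =>
            (∀ κ, q.1 (R κ) = par fk (κ.val + 1)) ∧
            (∀ κ, q.2 (R κ) = par fl (κ.val + 1))),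
          mminOver t (fun r => L1 t (sproj i r) (sproj j r) (q.1 r) (q.2 r)) := by
    refine Finset.sum_nbij'
      (fun p => ((fun r => sproj p.1 r), (fun r => sproj p.2 r)))
      (fun q => (dmap q.1, dmap q.2)) ?_ ?_ ?_ ?_ ?_
    · intro p hp
      rw [Finset.mem_filter] at hp ⊢
      refine ⟨Finset.mem_univ _, ?_, ?_⟩
      · exact (hcond p.1 fk).mp hp.2.1
      · exact (hcond p.2 fl).mp hp.2.2
    · intro q hq
      rw [Finset.mem_filter] at hq ⊢
      refine ⟨Finset.mem_univ _, ?_, ?_⟩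
      · refine (hcond (dmap q.1) fk).mpr (fun κ => ?_)
        rw [show sproj (dmap q.1) (R κ) = q.1 (R κ) from congrFun (sproj_dmap q.1) (R κ)]
        exact hq.2.1 κ
      · refine (hcond (dmap q.2) fl).mpr (fun κ => ?_)
        rw [show sproj (dmap q.2) (R κ) = q.2 (R κ) from congrFun (sproj_dmap q.2) (R κ)]
        exact hq.2.2 κ
    · intro p _
      ext : 1
      · exact dmap_sproj p.1
      · exact dmap_sproj p.2
    · intro q _
      ext : 1
      · exact sproj_dmap q.1
      · exact sproj_dmap q.2
    · intro p _
      rfl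
  rw [step1,
    core_erasure t ht0 ht1 ht2 (fun r => sproj i r) (fun r => sproj j r) R
      (fun κ => par fk (κ.val + 1)) (fun κ => par fl (κ.val + 1))]
  rw [Ln]
  congr 1
  funext κ
  rw [← sproj_eq_par fk κ, ← sproj_eq_par fl κ]
  rw [(hcond i fi).mp hi κ, (hcond j fj).mp hj κ, sproj_eq_par fi κ, sproj_eq_par fj κ]
end
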